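/- Let G be a simple d-regular graph (d ≥ 1) on a finite vertex set V of size n ≥ 1, let ε ≥ 0 and κ ∈ (0,1] be real, and suppose that for every subset S ⊆ V the number e(S, V∖S) of edges of G with exactly one endpoint in S satisfies e(S, V∖S) ≥ κ·d·|S|·(n−|S|)/n. Then for any three independent sets I₁, I₂, I₃ of G, each of size at least (1/2 − ε)·n, writing w_{kl} = |I_k ∩ I_l|/n, one has (w₁₂ + ε)² + (w₁₃ + ε)² + (w₂₃ + ε)² ≥ (1/4)·(1 − 6ε/κ). -/

import Mathlib

/-!
For independent sets `A`, `B` let `S` be the set of vertices on which membership in `A` and in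
`B` agree. An edge leaving `S` cannot start in `A ∩ B`, whose neighbours all lie in `(A ∪ B)ᶜ`,
so it starts in `(A ∪ B)ᶜ`; of the `d |(A ∪ B)ᶜ|` edges leaving `(A ∪ B)ᶜ`, `d |A ∩ B|` end in
`A ∩ B`. Hence `e(S, Sᶜ) ≤ d (n - |A| - |B|) ≤ 2εdn`, and expansion gives `κ x (1 - x) ≤ 2ε` for
`x = |S| / n`, while `x ≤ 2 (w + ε)` with `w = |A ∩ B| / n`. By pigeonhole the three agreement
sets cover `V`, so their densities sum to at least `1`, and summing
`κ x - 2ε ≤ κ x² ≤ 4κ (w + ε)²` over the three pairs gives the bound.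
-/

open Finset

/-- Number of edges of `G` with exactly one endpoint in `S` (counted via the
orientation whose first coordinate lies in `S`). -/
def crossCount {V : Type*} [Fintype V] [DecidableEq V] (G : SimpleGraph V)
    [DecidableRel G.Adj] (S : Finset V) : ℕ :=
  (Finset.univ.filter (fun p : V × V => G.Adj p.1 p.2 ∧ p.1 ∈ S ∧ p.2 ∉ S)).card

section Agreement

variable {V : Type*} [Fintype V] [DecidableEq V]

def agreeSet (A B : Finset V) : Finset V := A ∩ B ∪ (A ∪ B)ᶜ

theorem mem_agreeSet {A B : Finset V} {v : V} : v ∈ agreeSet A B ↔ (v ∈ A ↔ v ∈ B) := by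
  simp only [agreeSet, mem_union, mem_inter, mem_compl]
  tauto

theorem card_agreeSet_add_card_add_card (A B : Finset V) :
    #(agreeSet A B) + (#A + #B) = Fintype.card V + 2 * #(A ∩ B) := by
  have hdisj : Disjoint (A ∩ B) (A ∪ B)ᶜ :=
    disjoint_compl_right.mono_left inter_subset_union
  rw [agreeSet, card_union_of_disjoint hdisj, ← card_union_add_card_inter A B,
    ← card_add_card_compl (A ∪ B)]
  ring

theorem card_agreeSet_div_le {A B : Finset V} {ε : ℝ} (hn : 0 < (Fintype.card V : ℝ))
    (hA : (1 / 2 - ε) * Fintype.card V ≤ #A) (hB : (1 / 2 - ε) * Fintype.card V ≤ #B) :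
    (#(agreeSet A B) : ℝ) / Fintype.card V ≤ 2 * ((#(A ∩ B) : ℝ) / Fintype.card V + ε) := by
  have hcard : (#(agreeSet A B) : ℝ) + (#A + #B) = Fintype.card V + 2 * #(A ∩ B) := by
    exact_mod_cast card_agreeSet_add_card_add_card A B
  rw [div_le_iff₀ hn]
  field_simp
  linarith

theorem card_le_card_agreeSet_add (A B C : Finset V) :
    Fintype.card V ≤ #(agreeSet A B) + #(agreeSet A C) + #(agreeSet B C) := by
  have hcover : univ ⊆ agreeSet A B ∪ agreeSet A C ∪ agreeSet B C := by
    intro v _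
    simp only [mem_union, mem_agreeSet]
    tauto
  calc Fintype.card V ≤ #(agreeSet A B ∪ agreeSet A C ∪ agreeSet B C) := card_le_card hcover
    _ ≤ #(agreeSet A B ∪ agreeSet A C) + #(agreeSet B C) := card_union_le _ _
    _ ≤ _ := by gcongr; exact card_union_le _ _

end Agreement

namespace SimpleGraph

theorem IsIndepSet.not_adj {V : Type*} {G : SimpleGraph V} {s : Set V} (hs : G.IsIndepSet s)
    {u v : V} (hu : u ∈ s) (hv : v ∈ s) : ¬ G.Adj u v :=
  fun huv => hs hu hv huv.ne huv

theorem mem_compl_union_of_adj {V : Type*} [Fintype V] [DecidableEq V] {G : SimpleGraph V}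
    {A B : Finset V} (hA : G.IsIndepSet A) (hB : G.IsIndepSet B) {u v : V}
    (hu : u ∈ A ∩ B) (huv : G.Adj u v) : v ∈ (A ∪ B)ᶜ := by
  rw [mem_inter] at hu
  rw [mem_compl, mem_union]
  rintro (hv | hv)
  exacts [hA.not_adj hu.1 hv huv, hB.not_adj hu.2 hv huv]

variable {V : Type*} [Fintype V] {G : SimpleGraph V} [DecidableRel G.Adj] {d : ℕ}

theorem IsRegularOfDegree.card_interedges_univ (hreg : G.IsRegularOfDegree d) (s : Finset V) :
    #(G.interedges s univ) = d * #s := by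
  rw [interedges_def, card_filter, sum_product, sum_const_nat fun v _ => ?_, mul_comm]
  rw [← card_filter, ← neighborFinset_eq_filter, card_neighborFinset_eq_degree, hreg v]

variable [DecidableEq V] {A B : Finset V}

theorem crossCount_eq_card_interedges (S : Finset V) :
    crossCount G S = #(G.interedges S Sᶜ) := by
  unfold crossCount
  congr 1
  ext ⟨u, v⟩
  simp only [mem_filter, mem_univ, true_and, mk_mem_interedges_iff, mem_compl]
  tauto

theorem interedges_inter_univ (hA : G.IsIndepSet A) (hB : G.IsIndepSet B) :
    G.interedges (A ∩ B) univ = G.interedges (A ∩ B) (A ∪ B)ᶜ := by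
  ext ⟨u, v⟩
  simp only [mk_mem_interedges_iff, mem_univ, true_and]
  exact ⟨fun ⟨hu, huv⟩ => ⟨hu, mem_compl_union_of_adj hA hB hu huv, huv⟩,
    fun ⟨hu, _, huv⟩ => ⟨hu, huv⟩⟩

theorem crossCount_agreeSet_add_le (hreg : G.IsRegularOfDegree d) (hA : G.IsIndepSet A)
    (hB : G.IsIndepSet B) :
    crossCount G (agreeSet A B) + d * (#A + #B) ≤ d * Fintype.card V := by
  set M := A ∩ B
  set T := (A ∪ B)ᶜ
  set S := agreeSet A B
  have hcross : G.interedges S Sᶜ ⊆ G.interedges T Sᶜ := by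
    rintro ⟨u, v⟩ huv
    rw [mk_mem_interedges_iff] at huv ⊢
    obtain ⟨hu, hv, hadj⟩ := huv
    refine ⟨(mem_union.mp hu).resolve_left fun huM => ?_, hv, hadj⟩
    exact mem_compl.mp hv (mem_union_right _ (mem_compl_union_of_adj hA hB huM hadj))
  have hout : #(G.interedges T Sᶜ) + #(G.interedges T M) ≤ d * #T := by
    rw [← card_union_of_disjoint (G.interedges_disjoint_right _ ?_), ← hreg.card_interedges_univ]
    · exact card_le_card (union_subset (G.interedges_mono subset_rfl (subset_univ _))
        (G.interedges_mono subset_rfl (subset_univ _)))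
    · exact disjoint_compl_left.mono_right (subset_union_left : M ⊆ S)
  have hin : #(G.interedges T M) = d * #M := by
    rw [← hreg.card_interedges_univ, interedges_inter_univ hA hB]
    exact @Rel.card_interedges_comm _ G.Adj _ G.symm T M
  have hcard : #A + #B + #T = Fintype.card V + #M := by
    rw [← card_union_add_card_inter, ← card_add_card_compl (A ∪ B)]
    ring
  have hscaled : d * (#A + #B) + d * #T = d * Fintype.card V + d * #M := by
    rw [← mul_add, ← mul_add, hcard]
  have := card_le_card hcross
  rw [← crossCount_eq_card_interedges] at this
  omega

theorem mul_agreeSet_density_le {κ ε : ℝ} (hd : 0 < d) (hreg : G.IsRegularOfDegree d)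
    (hn : 0 < (Fintype.card V : ℝ))
    (hexp : ∀ S : Finset V, κ * d * (#S : ℝ) * ((Fintype.card V : ℝ) - #S) / Fintype.card V
      ≤ crossCount G S)
    (hA : G.IsIndepSet A) (hB : G.IsIndepSet B)
    (hsA : (1 / 2 - ε) * Fintype.card V ≤ #A) (hsB : (1 / 2 - ε) * Fintype.card V ≤ #B) :
    κ * (#(agreeSet A B) / Fintype.card V) * (1 - #(agreeSet A B) / Fintype.card V) ≤ 2 * ε := by
  have hd' : (0 : ℝ) < d := by exact_mod_cast hd
  have hcross : (crossCount G (agreeSet A B) : ℝ) + d * (#A + #B) ≤ d * Fintype.card V := by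
    exact_mod_cast crossCount_agreeSet_add_le hreg hA hB
  have hexpS := hexp (agreeSet A B)
  rw [div_le_iff₀ hn] at hexpS
  have hgap : (Fintype.card V : ℝ) - #A - #B ≤ 2 * ε * Fintype.card V := by linarith
  have hcut : (crossCount G (agreeSet A B) : ℝ) ≤ d * (2 * ε * Fintype.card V) := by
    linarith [mul_le_mul_of_nonneg_left hgap hd'.le]
  have hscaled : d * (κ * #(agreeSet A B) * (Fintype.card V - #(agreeSet A B)))
      ≤ d * (2 * ε * (Fintype.card V : ℝ) ^ 2) :=
    calc _ = κ * d * #(agreeSet A B) * (Fintype.card V - #(agreeSet A B)) := by ring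
      _ ≤ crossCount G (agreeSet A B) * Fintype.card V := hexpS
      _ ≤ d * (2 * ε * Fintype.card V) * Fintype.card V := by gcongr
      _ = d * (2 * ε * (Fintype.card V : ℝ) ^ 2) := by ring
  calc κ * (#(agreeSet A B) / Fintype.card V) * (1 - #(agreeSet A B) / Fintype.card V)
      = κ * #(agreeSet A B) * (Fintype.card V - #(agreeSet A B)) / (Fintype.card V : ℝ) ^ 2 := by
        field_simp
    _ ≤ 2 * ε := by
        rw [div_le_iff₀ (by positivity)]
        exact le_of_mul_le_mul_left hscaled hd'

end SimpleGraph

theorem quarter_mul_one_sub_le_sum_sq {κ ε x₁ x₂ x₃ w₁ w₂ w₃ : ℝ} (hκ : 0 < κ)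
    (hx : 1 ≤ x₁ + x₂ + x₃) (hx₁ : 0 ≤ x₁) (hx₂ : 0 ≤ x₂) (hx₃ : 0 ≤ x₃)
    (hw₁ : x₁ ≤ 2 * (w₁ + ε)) (hw₂ : x₂ ≤ 2 * (w₂ + ε)) (hw₃ : x₃ ≤ 2 * (w₃ + ε))
    (hq₁ : κ * x₁ * (1 - x₁) ≤ 2 * ε) (hq₂ : κ * x₂ * (1 - x₂) ≤ 2 * ε)
    (hq₃ : κ * x₃ * (1 - x₃) ≤ 2 * ε) :
    1 / 4 * (1 - 6 * ε / κ) ≤ (w₁ + ε) ^ 2 + (w₂ + ε) ^ 2 + (w₃ + ε) ^ 2 := by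
  have key : ∀ x w, 0 ≤ x → x ≤ 2 * (w + ε) → κ * x * (1 - x) ≤ 2 * ε →
      κ * x - 2 * ε ≤ 4 * κ * (w + ε) ^ 2 := by
    intro x w h0 hw hq
    have : x ^ 2 ≤ (2 * (w + ε)) ^ 2 := pow_le_pow_left₀ h0 hw 2
    nlinarith
  have hsum : κ - 6 * ε ≤ 4 * κ * ((w₁ + ε) ^ 2 + (w₂ + ε) ^ 2 + (w₃ + ε) ^ 2) := by
    nlinarith [key x₁ w₁ hx₁ hw₁ hq₁, key x₂ w₂ hx₂ hw₂ hq₂, key x₃ w₃ hx₃ hw₃ hq₃]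
  calc 1 / 4 * (1 - 6 * ε / κ) = (κ - 6 * ε) / (4 * κ) := by field_simp
    _ ≤ _ := by rw [div_le_iff₀ (by positivity)]; linarith

theorem sum_of_squared_intersections_lower_bound_general
    {V : Type*} [Fintype V] [DecidableEq V]
    (G : SimpleGraph V) [DecidableRel G.Adj]
    (d n : ℕ) (hd : 1 ≤ d) (hreg : G.IsRegularOfDegree d)
    (hn : n = Fintype.card V) (hn1 : 1 ≤ n)
    (ε κ : ℝ) (hκ0 : 0 < κ)
    (hexp : ∀ S : Finset V,
      κ * d * (S.card : ℝ) * ((n : ℝ) - S.card) / n ≤ (crossCount G S : ℝ))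
    (I₁ I₂ I₃ : Finset V)
    (h₁ : ∀ u ∈ I₁, ∀ v ∈ I₁, ¬ G.Adj u v)
    (h₂ : ∀ u ∈ I₂, ∀ v ∈ I₂, ¬ G.Adj u v)
    (h₃ : ∀ u ∈ I₃, ∀ v ∈ I₃, ¬ G.Adj u v)
    (hs₁ : ((1 : ℝ)/2 - ε) * n ≤ (I₁.card : ℝ))
    (hs₂ : ((1 : ℝ)/2 - ε) * n ≤ (I₂.card : ℝ))
    (hs₃ : ((1 : ℝ)/2 - ε) * n ≤ (I₃.card : ℝ))
    (w₁₂ w₁₃ w₂₃ : ℝ)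
    (hw₁₂ : w₁₂ = ((I₁ ∩ I₂).card : ℝ) / n)
    (hw₁₃ : w₁₃ = ((I₁ ∩ I₃).card : ℝ) / n)
    (hw₂₃ : w₂₃ = ((I₂ ∩ I₃).card : ℝ) / n) :
    (1 : ℝ)/4 * (1 - 6 * ε / κ) ≤ (w₁₂ + ε)^2 + (w₁₃ + ε)^2 + (w₂₃ + ε)^2 := by
  subst hn hw₁₂ hw₁₃ hw₂₃
  have hn : (0 : ℝ) < Fintype.card V := by exact_mod_cast hn1
  have hI₁ : G.IsIndepSet I₁ := fun u hu v hv _ => h₁ u hu v hv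
  have hI₂ : G.IsIndepSet I₂ := fun u hu v hv _ => h₂ u hu v hv
  have hI₃ : G.IsIndepSet I₃ := fun u hu v hv _ => h₃ u hu v hv
  have hcover : (1 : ℝ) ≤ #(agreeSet I₁ I₂) / Fintype.card V + #(agreeSet I₁ I₃) / Fintype.card V
      + #(agreeSet I₂ I₃) / Fintype.card V := by
    rw [← add_div, ← add_div, le_div_iff₀ hn, one_mul]
    exact_mod_cast card_le_card_agreeSet_add I₁ I₂ I₃
  exact quarter_mul_one_sub_le_sum_sq hκ0 hcover (by positivity) (by positivity) (by positivity)
    (card_agreeSet_div_le hn hs₁ hs₂) (card_agreeSet_div_le hn hs₁ hs₃)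
    (card_agreeSet_div_le hn hs₂ hs₃)
    (G.mul_agreeSet_density_le hd hreg hn hexp hI₁ hI₂ hs₁ hs₂)
    (G.mul_agreeSet_density_le hd hreg hn hexp hI₁ hI₃ hs₁ hs₃)
    (G.mul_agreeSet_density_le hd hreg hn hexp hI₂ hI₃ hs₂ hs₃)

theorem sum_of_squared_intersections_lower_bound
    {V : Type*} [Fintype V] [DecidableEq V]
    (G : SimpleGraph V) [DecidableRel G.Adj]
    (d n : ℕ) (hd : 1 ≤ d) (hreg : G.IsRegularOfDegree d)
    (hn : n = Fintype.card V) (hn1 : 1 ≤ n)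
    (ε κ : ℝ) (hε : 0 ≤ ε) (hκ0 : 0 < κ) (hκ1 : κ ≤ 1)
    (hexp : ∀ S : Finset V,
      κ * d * (S.card : ℝ) * ((n : ℝ) - S.card) / n ≤ (crossCount G S : ℝ))
    (I₁ I₂ I₃ : Finset V)
    (h₁ : ∀ u ∈ I₁, ∀ v ∈ I₁, ¬ G.Adj u v)
    (h₂ : ∀ u ∈ I₂, ∀ v ∈ I₂, ¬ G.Adj u v)
    (h₃ : ∀ u ∈ I₃, ∀ v ∈ I₃, ¬ G.Adj u v)
    (hs₁ : ((1 : ℝ)/2 - ε) * n ≤ (I₁.card : ℝ))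
    (hs₂ : ((1 : ℝ)/2 - ε) * n ≤ (I₂.card : ℝ))
    (hs₃ : ((1 : ℝ)/2 - ε) * n ≤ (I₃.card : ℝ))
    (w₁₂ w₁₃ w₂₃ : ℝ)
    (hw₁₂ : w₁₂ = ((I₁ ∩ I₂).card : ℝ) / n)
    (hw₁₃ : w₁₃ = ((I₁ ∩ I₃).card : ℝ) / n)
    (hw₂₃ : w₂₃ = ((I₂ ∩ I₃).card : ℝ) / n) :
    (1 : ℝ)/4 * (1 - 6 * ε / κ) ≤ (w₁₂ + ε)^2 + (w₁₃ + ε)^2 + (w₂₃ + ε)^2 :=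
  sum_of_squared_intersections_lower_bound_general G d n hd hreg hn hn1 ε κ hκ0 hexp I₁ I₂ I₃ h₁ h₂
    h₃ hs₁ hs₂ hs₃ w₁₂ w₁₃ w₂₃ hw₁₂ hw₁₃ hw₂₃
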